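/- arXiv:1806.00709 — 3 statements merged into one kernel-verified Lean document; each statement's English description precedes it below -/
import Mathlib

section
/- Fix an integer t ≥ 0. Suppose v : Ω → 𝓑 is a random vector independent of ℋ_t whose mean γ̄ = E[v] satisfies ⟨a_i, γ̄⟩ ≤ b_i for all i ∈ {1,…,N}, and suppose that almost surely V⟨∇f(γ_{t−1}), x_t⟩ + ⟨Q(t), A x_t⟩ ≤ V⟨∇f(γ_{t−1}), v⟩ + ⟨Q(t), A v⟩ (i.e. x_t achieves no larger value of the algorithm's linear objective than v). Then almost surely E[ V⟨∇f(γ_{t−1}), x_t − γ_{t−1}⟩ + ⟨Q(t), A x_t − b⟩ | ℋ_t ] ≤ V⟨∇f(γ_{t−1}), γ̄ − γ_{t−1}⟩. -/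
/-!
Put `w = V ∇f(γ_{t-1}) + Aᵀ Q(t)` and `r = V ⟨∇f(γ_{t-1}), γ_{t-1}⟩ + ⟨Q(t), b⟩`, both
`ℋ_t`-measurable. The integrand is `⟨w, x_t⟩ - r`, and the optimality of `x_t` says it is at most
`⟨w, v⟩ - r`. Conditioning on `ℋ_t` pulls `w` and `r` out, and independence replaces `v` by its
mean `γ̄`. Finally `⟨Q(t), A γ̄⟩ ≤ ⟨Q(t), b⟩` since `Q(t) ≥ 0` and `γ̄` is feasible.
Everything is integrable because everything is bounded: `0 ≤ Q_i(t) ≤ t (‖a_i‖ D + |b_i|)`.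
-/

open MeasureTheory ProbabilityTheory

section ConditionalExpectation

variable {Ω E : Type*} {m mv m₀ : MeasurableSpace Ω} {μ : Measure Ω}
  [NormedAddCommGroup E] [InnerProductSpace ℝ E]

lemma integrable_inner_of_norm_le {w v : Ω → E} {C : ℝ} (hw : AEStronglyMeasurable w μ)
    (hwC : ∀ ω, ‖w ω‖ ≤ C) (hv : Integrable v μ) :
    Integrable (fun ω => inner ℝ (w ω) (v ω)) μ := by
  refine (hv.norm.const_mul C).mono' (hw.inner hv.1) (ae_of_all _ fun ω => ?_)
  calc ‖inner ℝ (w ω) (v ω)‖ ≤ ‖w ω‖ * ‖v ω‖ := norm_inner_le_norm _ _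
    _ ≤ C * ‖v ω‖ := by gcongr; exact hwC ω

lemma condExp_inner_of_indep [CompleteSpace E] (hmv : mv ≤ m₀) (hm : m ≤ m₀)
    [SigmaFinite (μ.trim hm)] (hindep : Indep mv m μ) {w v : Ω → E} (hw : StronglyMeasurable[m] w)
    (hv : StronglyMeasurable[mv] v) (hwv : Integrable (fun ω => inner ℝ (w ω) (v ω)) μ)
    (hvint : Integrable v μ) :
    μ[fun ω => inner ℝ (w ω) (v ω) | m] =ᵐ[μ] fun ω => inner ℝ (w ω) μ[v] := by
  have hpull := condExp_bilin_of_stronglyMeasurable_left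
    (innerSL ℝ : E →L[ℝ] E →L[ℝ] ℝ) hw hwv hvint
  filter_upwards [hpull, condExp_indep_eq hmv hm hv hindep] with ω hpull_ω hindep_ω
  rw [← hindep_ω]
  exact hpull_ω

lemma condExp_inner_sub_le_of_indep [CompleteSpace E] [IsFiniteMeasure μ] (hmv : mv ≤ m₀)
    (hm : m ≤ m₀) (hindep : Indep mv m μ) {w x v : Ω → E} {r : Ω → ℝ} {Cw Cx : ℝ}
    (hw : StronglyMeasurable[m] w) (hwC : ∀ ω, ‖w ω‖ ≤ Cw)
    (hx : AEStronglyMeasurable x μ) (hxC : ∀ ω, ‖x ω‖ ≤ Cx)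
    (hv : StronglyMeasurable[mv] v) (hvint : Integrable v μ)
    (hr : StronglyMeasurable[m] r) (hrint : Integrable r μ)
    (hxv : ∀ᵐ ω ∂μ, inner ℝ (w ω) (x ω) ≤ inner ℝ (w ω) (v ω)) :
    μ[fun ω => inner ℝ (w ω) (x ω) - r ω | m] ≤ᵐ[μ] fun ω => inner ℝ (w ω) μ[v] - r ω := by
  have hw' := (hw.mono hm).aestronglyMeasurable (μ := μ)
  have hxint : Integrable x μ := .of_bound hx Cx (ae_of_all _ hxC)
  have hwv := integrable_inner_of_norm_le hw' hwC hvint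
  have hmono := condExp_mono (m := m) ((integrable_inner_of_norm_le hw' hwC hxint).sub hrint)
    (hwv.sub hrint) (hxv.mono fun ω h => sub_le_sub_right h (r ω))
  filter_upwards [hmono, condExp_sub hwv hrint m,
    condExp_inner_of_indep hmv hm hindep hw hv hwv hvint] with ω hmono_ω hsub_ω hinner_ω
  rwa [hsub_ω, Pi.sub_apply, hinner_ω, condExp_of_stronglyMeasurable hm hr hrint] at hmono_ω

end ConditionalExpectation

lemma Convex.averagedIterate_mem {E : Type*} [AddCommGroup E] [Module ℝ E] {B : Set E}
    (hB : Convex ℝ B) {η : ℝ} (hη0 : 0 ≤ η) (hη1 : η ≤ 1) {γ x : ℕ → E} (h0 : γ 0 ∈ B)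
    (hx : ∀ s, x s ∈ B) (hrec : ∀ s, γ (s + 1) = (1 - η) • γ s + η • x s) :
    ∀ s, γ s ∈ B := by
  intro s
  induction s with
  | zero => exact h0
  | succ s ih => rw [hrec]; exact hB ih (hx s) (by linarith) hη0 (by ring)

lemma measurable_of_adapted_recursion {Ω α β : Type*} {m₀ : MeasurableSpace Ω}
    [MeasurableSpace α] [MeasurableSpace β] {ℋ : Filtration ℕ m₀} {F : β → α → β}
    (hF : Measurable (Function.uncurry F)) {y : ℕ → Ω → β} {x : ℕ → Ω → α}
    (h0 : Measurable[ℋ 0] (y 0)) (hx : ∀ s, Measurable[ℋ (s + 1)] (x s))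
    (hrec : ∀ s ω, y (s + 1) ω = F (y s ω) (x s ω)) : ∀ s, Measurable[ℋ s] (y s) := by
  intro s
  induction s with
  | zero => exact h0
  | succ s ih =>
    rw [show y (s + 1) = fun ω => F (y s ω) (x s ω) from funext (hrec s)]
    exact hF.comp ((ih.mono (ℋ.mono s.le_succ) le_rfl).prodMk (hx s))

lemma queue_nonneg {q y : ℕ → ℝ} (h0 : q 0 = 0) (hrec : ∀ s, q (s + 1) = max (q s + y s) 0) :
    ∀ s, 0 ≤ q s
  | 0 => h0.ge
  | s + 1 => (hrec s).symm ▸ le_max_right _ _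

lemma queue_le_mul {q y : ℕ → ℝ} (h0 : q 0 = 0) (hrec : ∀ s, q (s + 1) = max (q s + y s) 0)
    {C : ℝ} (hC : 0 ≤ C) (hy : ∀ s, y s ≤ C) : ∀ s, q s ≤ s * C
  | 0 => by simp [h0]
  | s + 1 => by
    rw [hrec s]
    have ih := queue_le_mul h0 hrec hC hy s
    push_cast
    exact max_le (by linarith [hy s]) (by positivity)

lemma measurable_of_hasGradientAt {E : Type*} [NormedAddCommGroup E] [InnerProductSpace ℝ E]
    [CompleteSpace E] [MeasurableSpace E] [BorelSpace E] {f : E → ℝ} {f' : E → E}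
    (h : ∀ z, HasGradientAt f (f' z) z) : Measurable f' := by
  rw [show f' = gradient f from funext fun z => (h z).gradient.symm]
  exact (InnerProductSpace.toDual ℝ E).symm.continuous.measurable.comp (measurable_fderiv ℝ f)

section VirtualQueue

variable {Ω E : Type*} [NormedAddCommGroup E] [InnerProductSpace ℝ E] {N : ℕ}
  {a : Fin N → E} {b : Fin N → ℝ} {x : ℕ → Ω → E} {Q : ℕ → Ω → EuclideanSpace ℝ (Fin N)}

lemma virtualQueue_bounds {D : ℝ} (hxD : ∀ s ω, ‖x s ω‖ ≤ D) (hQ0 : ∀ ω, Q 0 ω = 0)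
    (hQrec : ∀ s ω i, Q (s + 1) ω i = max (Q s ω i + inner ℝ (a i) (x s ω) - b i) 0)
    (s : ℕ) (ω : Ω) (i : Fin N) : 0 ≤ Q s ω i ∧ Q s ω i ≤ s * (‖a i‖ * D + |b i|) := by
  have h0 : Q 0 ω i = 0 := by simp [hQ0]
  have hrec : ∀ s, Q (s + 1) ω i = max (Q s ω i + (inner ℝ (a i) (x s ω) - b i)) 0 :=
    fun s => by rw [hQrec, add_sub_assoc]
  have hD : 0 ≤ D := (norm_nonneg _).trans (hxD 0 ω)
  have hy : ∀ s, inner ℝ (a i) (x s ω) - b i ≤ ‖a i‖ * D + |b i| := fun s => by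
    have hinner := (real_inner_le_norm (a i) (x s ω)).trans
      (mul_le_mul_of_nonneg_left (hxD s ω) (norm_nonneg _))
    linarith [neg_abs_le (b i)]
  exact ⟨queue_nonneg (q := (Q · ω i)) h0 hrec s,
    queue_le_mul (q := (Q · ω i)) h0 hrec (by positivity) hy s⟩

lemma measurable_virtualQueue {m₀ : MeasurableSpace Ω} {ℋ : Filtration ℕ m₀}
    [MeasurableSpace E] [OpensMeasurableSpace E] (hx : ∀ s, Measurable[ℋ (s + 1)] (x s))
    (hQ0 : ∀ ω, Q 0 ω = 0)
    (hQrec : ∀ s ω i, Q (s + 1) ω i = max (Q s ω i + inner ℝ (a i) (x s ω) - b i) 0)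
    (i : Fin N) (s : ℕ) : Measurable[ℋ s] fun ω => Q s ω i :=
  measurable_of_adapted_recursion (F := fun q y : ℝ => max (q + y) 0) (y := fun s ω => Q s ω i)
    (x := fun s ω => inner ℝ (a i) (x s ω) - b i) (by fun_prop)
    (by simp only [hQ0]; exact measurable_const)
    (fun s => ((by fun_prop : Continuous (inner ℝ (a i))).measurable.comp (hx s)).sub_const (b i))
    (fun s ω => by rw [hQrec, add_sub_assoc]) s

end VirtualQueue

section DriftPlusPenalty

variable {Ω E : Type*} {m mv m₀ : MeasurableSpace Ω} {μ : Measure Ω} [IsFiniteMeasure μ]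
  [NormedAddCommGroup E] [InnerProductSpace ℝ E] [CompleteSpace E] [MeasurableSpace E]
  [BorelSpace E] [SecondCountableTopology E] {N : ℕ} {a : Fin N → E} {b : Fin N → ℝ}

lemma condExp_driftPlusPenalty_le (hm : m ≤ m₀) (hmv : mv ≤ m₀) (hindep : Indep mv m μ)
    {g y x v : Ω → E} {q : Ω → Fin N → ℝ} {V M D : ℝ} {C : Fin N → ℝ}
    (hg : Measurable[m] g) (hgM : ∀ ω, ‖g ω‖ ≤ M) (hy : Measurable[m] y) (hyD : ∀ ω, ‖y ω‖ ≤ D)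
    (hq : ∀ i, Measurable[m] (q · i)) (hqC : ∀ ω i, 0 ≤ q ω i ∧ q ω i ≤ C i)
    (hx : Measurable x) (hxD : ∀ ω, ‖x ω‖ ≤ D) (hv : Measurable[mv] v) (hvint : Integrable v μ)
    (hfeas : ∀ i, inner ℝ (a i) μ[v] ≤ b i)
    (hopt : ∀ᵐ ω ∂μ, V * inner ℝ (g ω) (x ω) + ∑ i, q ω i * inner ℝ (a i) (x ω)
      ≤ V * inner ℝ (g ω) (v ω) + ∑ i, q ω i * inner ℝ (a i) (v ω)) :
    ∀ᵐ ω ∂μ, μ[fun ω' => V * inner ℝ (g ω') (x ω' - y ω')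
        + ∑ i, q ω' i * (inner ℝ (a i) (x ω') - b i) | m] ω
      ≤ V * inner ℝ (g ω) (μ[v] - y ω) := by
  set w : Ω → E := fun ω => V • g ω + ∑ i, q ω i • a i with hw
  set r : Ω → ℝ := fun ω => V * inner ℝ (g ω) (y ω) + ∑ i, q ω i * b i with hr
  have hw_inner : ∀ ω z, inner ℝ (w ω) z
      = V * inner ℝ (g ω) z + ∑ i, q ω i * inner ℝ (a i) z := fun ω z => by
    simp only [hw, inner_add_left, real_inner_smul_left, sum_inner]
  have hw_meas : Measurable[m] w :=
    (hg.const_smul V).add (Finset.measurable_sum _ fun i _ => (hq i).smul_const (a i))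
  have hw_bd : ∀ ω, ‖w ω‖ ≤ ‖V‖ * M + ∑ i, C i * ‖a i‖ := fun ω => by
    refine (norm_add_le _ _).trans (add_le_add ?_
      ((norm_sum_le _ _).trans (Finset.sum_le_sum fun i _ => ?_)))
    · rw [norm_smul]; gcongr; exact hgM ω
    · rw [norm_smul, Real.norm_of_nonneg (hqC ω i).1]; gcongr; exact (hqC ω i).2
  have hr_meas : Measurable[m] r :=
    ((hg.inner hy).const_mul V).add (Finset.measurable_sum _ fun i _ => (hq i).mul_const (b i))
  have hy_int : Integrable y μ :=
    .of_bound (hy.mono hm le_rfl).aestronglyMeasurable D (ae_of_all _ hyD)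
  have hq_int : ∀ i, Integrable (q · i) μ := fun i =>
    .of_bound ((hq i).mono hm le_rfl).aestronglyMeasurable _ (ae_of_all _ fun ω => by
      rw [Real.norm_of_nonneg (hqC ω i).1]; exact (hqC ω i).2)
  have hr_int : Integrable r μ :=
    ((integrable_inner_of_norm_le (hg.mono hm le_rfl).aestronglyMeasurable hgM hy_int).const_mul
      V).add (integrable_finsetSum _ fun i _ => (hq_int i).mul_const (b i))
  have key := condExp_inner_sub_le_of_indep hmv hm hindep hw_meas.stronglyMeasurable hw_bd
    hx.aestronglyMeasurable hxD hv.stronglyMeasurable hvint hr_meas.stronglyMeasurable hr_int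
    (hopt.mono fun ω h => by simpa only [hw_inner] using h)
  have hintegrand : (fun ω' => V * inner ℝ (g ω') (x ω' - y ω')
      + ∑ i, q ω' i * (inner ℝ (a i) (x ω') - b i)) = fun ω => inner ℝ (w ω) (x ω) - r ω := by
    funext ω
    simp only [hw_inner, hr, inner_sub_right, mul_sub, Finset.sum_sub_distrib]
    ring
  rw [hintegrand]
  filter_upwards [key] with ω hω
  refine hω.trans ?_
  have hfeas_ω : ∑ i, q ω i * inner ℝ (a i) μ[v] ≤ ∑ i, q ω i * b i :=
    Finset.sum_le_sum fun i _ => mul_le_mul_of_nonneg_left (hfeas i) (hqC ω i).1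
  rw [hw_inner, inner_sub_right]
  simp only [hr]
  linarith

end DriftPlusPenalty

theorem stmt0_general
    {d N : ℕ}
    {Ω : Type*} {m0 : MeasurableSpace Ω} (μ : Measure Ω) [IsProbabilityMeasure μ]
    (ℋ : Filtration ℕ m0)
    (Bset : Set (EuclideanSpace ℝ (Fin d))) (D : ℝ)
    (hBconv : Convex ℝ Bset)
    (hB0 : (0 : EuclideanSpace ℝ (Fin d)) ∈ Bset)
    (hBD : ∀ z ∈ Bset, ∀ w ∈ Bset, ‖z - w‖ ≤ D)
    (f : EuclideanSpace ℝ (Fin d) → ℝ) (f' : EuclideanSpace ℝ (Fin d) → EuclideanSpace ℝ (Fin d)) (M : ℝ)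
    (hgrad : ∀ z, HasGradientAt f (f' z) z)
    (hM : ∀ z ∈ Bset, ‖f' z‖ ≤ M)
    (a : Fin N → EuclideanSpace ℝ (Fin d)) (b : Fin N → ℝ)
    (x : ℕ → Ω → EuclideanSpace ℝ (Fin d))
    (hxB : ∀ t ω, x t ω ∈ Bset)
    (hxmeas : ∀ t, Measurable[ℋ (t + 1)] (x t))
    (η V : ℝ) (hη0 : 0 < η) (hη1 : η < 1)
    (Q : ℕ → Ω → EuclideanSpace ℝ (Fin N))
    (hQ0 : ∀ ω, Q 0 ω = 0)
    (hQrec : ∀ t ω i, Q (t + 1) ω i = max (Q t ω i + (inner ℝ (a i) (x t ω) : ℝ) - b i) 0)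
    (γ : ℕ → Ω → EuclideanSpace ℝ (Fin d))
    (hγ0 : ∀ ω, γ 0 ω = 0)
    (hγrec : ∀ t ω, γ (t + 1) ω = (1 - η) • γ t ω + η • x t ω)
    (t : ℕ)
    (v : Ω → EuclideanSpace ℝ (Fin d))
    (hvmeas : Measurable v) (hvint : Integrable v μ)
    (hvindep : Indep (MeasurableSpace.comap v inferInstance) (ℋ t) μ)
    (γbar : EuclideanSpace ℝ (Fin d)) (hγbar : γbar = ∫ ω, v ω ∂μ)
    (hγbarfeas : ∀ i, (inner ℝ (a i) γbar : ℝ) ≤ b i)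
    (hopt : ∀ᵐ ω ∂μ,
      V * (inner ℝ (f' (γ t ω)) (x t ω) : ℝ) + ∑ i, Q t ω i * (inner ℝ (a i) (x t ω) : ℝ)
        ≤ V * (inner ℝ (f' (γ t ω)) (v ω) : ℝ) + ∑ i, Q t ω i * (inner ℝ (a i) (v ω) : ℝ)) :
    ∀ᵐ ω ∂μ,
      (μ[(fun ω' => V * (inner ℝ (f' (γ t ω')) (x t ω' - γ t ω') : ℝ)
          + ∑ i, Q t ω' i * ((inner ℝ (a i) (x t ω') : ℝ) - b i)) | ℋ t]) ω
        ≤ V * (inner ℝ (f' (γ t ω)) (γbar - γ t ω) : ℝ) := by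
  subst hγbar
  have hnorm_le : ∀ z ∈ Bset, ‖z‖ ≤ D := fun z hz => by simpa using hBD z hz 0 hB0
  have hγB : ∀ s ω, γ s ω ∈ Bset := fun s ω =>
    hBconv.averagedIterate_mem (γ := (γ · ω)) hη0.le hη1.le (hγ0 ω ▸ hB0) (hxB · ω)
      (hγrec · ω) s
  have hγmeas : ∀ s, Measurable[ℋ s] (γ s) :=
    measurable_of_adapted_recursion (F := fun z y => (1 - η) • z + η • y) (by fun_prop)
      (by rw [funext hγ0]; exact measurable_const) hxmeas hγrec
  exact condExp_driftPlusPenalty_le (ℋ.le t) hvmeas.comap_le hvindep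
    ((measurable_of_hasGradientAt hgrad).comp (hγmeas t)) (fun ω => hM _ (hγB t ω))
    (hγmeas t) (fun ω => hnorm_le _ (hγB t ω)) (measurable_virtualQueue hxmeas hQ0 hQrec · t)
    (virtualQueue_bounds (fun s ω => hnorm_le _ (hxB s ω)) hQ0 hQrec t)
    ((hxmeas t).mono (ℋ.le _) le_rfl) (fun ω => hnorm_le _ (hxB t ω)) (comap_measurable v) hvint
    hγbarfeas hopt

theorem stmt0
    {d N : ℕ}
    {Ω : Type*} {m0 : MeasurableSpace Ω} (μ : Measure Ω) [IsProbabilityMeasure μ]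
    (ℋ : Filtration ℕ m0)
    (Bset : Set (EuclideanSpace ℝ (Fin d))) (D : ℝ)
    (hBconv : Convex ℝ Bset) (hBcpt : IsCompact Bset)
    (hB0 : (0 : EuclideanSpace ℝ (Fin d)) ∈ Bset)
    (hBD : ∀ z ∈ Bset, ∀ w ∈ Bset, ‖z - w‖ ≤ D)
    (f : EuclideanSpace ℝ (Fin d) → ℝ) (f' : EuclideanSpace ℝ (Fin d) → EuclideanSpace ℝ (Fin d)) (L M K : ℝ)
    (hgrad : ∀ z, HasGradientAt f (f' z) z)
    (hLip : ∀ z ∈ Bset, ∀ w ∈ Bset, ‖f' z - f' w‖ ≤ L * ‖z - w‖)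
    (hM : ∀ z ∈ Bset, ‖f' z‖ ≤ M)
    (hK : ∀ z ∈ Bset, |f z| ≤ K)
    (a : Fin N → EuclideanSpace ℝ (Fin d)) (b : Fin N → ℝ)
    (x : ℕ → Ω → EuclideanSpace ℝ (Fin d))
    (hxB : ∀ t ω, x t ω ∈ Bset)
    (hxmeas : ∀ t, Measurable[ℋ (t + 1)] (x t))
    (η V : ℝ) (hη0 : 0 < η) (hη1 : η < 1) (hV : 0 < V)
    (Q : ℕ → Ω → EuclideanSpace ℝ (Fin N))
    (hQ0 : ∀ ω, Q 0 ω = 0)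
    (hQrec : ∀ t ω i, Q (t + 1) ω i = max (Q t ω i + (inner ℝ (a i) (x t ω) : ℝ) - b i) 0)
    (γ : ℕ → Ω → EuclideanSpace ℝ (Fin d))
    (hγ0 : ∀ ω, γ 0 ω = 0)
    (hγrec : ∀ t ω, γ (t + 1) ω = (1 - η) • γ t ω + η • x t ω)
    (t : ℕ)
    (v : Ω → EuclideanSpace ℝ (Fin d)) (hvB : ∀ ω, v ω ∈ Bset)
    (hvmeas : Measurable v) (hvint : Integrable v μ)
    (hvindep : Indep (MeasurableSpace.comap v inferInstance) (ℋ t) μ)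
    (γbar : EuclideanSpace ℝ (Fin d)) (hγbar : γbar = ∫ ω, v ω ∂μ)
    (hγbarfeas : ∀ i, (inner ℝ (a i) γbar : ℝ) ≤ b i)
    (hopt : ∀ᵐ ω ∂μ,
      V * (inner ℝ (f' (γ t ω)) (x t ω) : ℝ) + ∑ i, Q t ω i * (inner ℝ (a i) (x t ω) : ℝ)
        ≤ V * (inner ℝ (f' (γ t ω)) (v ω) : ℝ) + ∑ i, Q t ω i * (inner ℝ (a i) (v ω) : ℝ)) :
    ∀ᵐ ω ∂μ,
      (μ[(fun ω' => V * (inner ℝ (f' (γ t ω')) (x t ω' - γ t ω') : ℝ)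
          + ∑ i, Q t ω' i * ((inner ℝ (a i) (x t ω') : ℝ) - b i)) | ℋ t]) ω
        ≤ V * (inner ℝ (f' (γ t ω)) (γbar - γ t ω) : ℝ) :=
  stmt0_general μ ℋ Bset D hBconv hB0 hBD f f' M hgrad hM a b x hxB hxmeas η V hη0 hη1 Q hQ0 hQrec γ
    hγ0 hγrec t v hvmeas hvint hvindep γbar hγbar hγbarfeas hopt
end

section
/- Define the coupled sequence γ̃_{−1} = 0 and γ̃_t = (1−η) γ̃_{t−1} + η x̃_t, where x̃_t = E[x_t | ℋ_t] is the conditional expectation of x_t given ℋ_t. Then for every t ≥ 0, E[ ‖γ_t − γ̃_t‖² ] ≤ η D². -/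
/-!
Write `u_t = x_t - E[x_t | ℋ_t]`. By linearity `γ_t - γ̃_t` is the exponential average `δ_t` of
the `u_s`, and it is `ℋ_t`-measurable while `u_t` is `L²`-orthogonal to every `ℋ_t`-measurable
function. Hence `E‖δ_{t+1}‖² = (1-η)² E‖δ_t‖² + η² E‖u_t‖²`, with `E‖u_t‖² ≤ E‖x_t‖² ≤ D²`
because `0 ∈ 𝓑`, and since `(1-η)² η + η² ≤ η` the bound `E‖δ_t‖² ≤ η D²` propagates by induction.
-/

open MeasureTheory ProbabilityTheory
open scoped RealInnerProductSpace

/-- `expAvg η z (t + 1)` is the paper's `γ_t` for the inputs `z`: index `0` stands for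
`γ_{-1} = 0`. -/
def expAvg {F : Type*} [AddCommGroup F] [Module ℝ F] (η : ℝ) (z : ℕ → F) : ℕ → F
  | 0 => 0
  | t + 1 => (1 - η) • expAvg η z t + η • z t

section expAvg

variable {F : Type*} [AddCommGroup F] [Module ℝ F] {η : ℝ} {z w : ℕ → F}

@[simp]
theorem expAvg_zero : expAvg η z 0 = 0 := rfl

theorem expAvg_succ (t : ℕ) : expAvg η z (t + 1) = (1 - η) • expAvg η z t + η • z t := rfl

theorem eq_expAvg {y : ℕ → F} (h0 : y 0 = 0) (hrec : ∀ t, y (t + 1) = (1 - η) • y t + η • z t) :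
    y = expAvg η z := by
  funext t
  induction t with
  | zero => exact h0
  | succ t ih => rw [hrec, ih, expAvg_succ]

theorem expAvg_sub (t : ℕ) : expAvg η (z - w) t = expAvg η z t - expAvg η w t := by
  induction t with
  | zero => simp
  | succ t ih => simp only [expAvg_succ, ih, Pi.sub_apply, smul_sub]; abel

end expAvg

namespace MeasureTheory

variable {Ω E : Type*} {m m0 : MeasurableSpace Ω} {μ : Measure Ω} [NormedAddCommGroup E]

theorem MemLp.integrable_norm_sq {f : Ω → E} (hf : MemLp f 2 μ) :
    Integrable (fun ω => ‖f ω‖ ^ 2) μ :=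
  (memLp_two_iff_integrable_sq_norm hf.1).1 hf

section NormedSpace

variable [NormedSpace ℝ E]

theorem stronglyAdapted_expAvg (ℋ : Filtration ℕ m0) {η : ℝ} {z : ℕ → Ω → E}
    (hz : ∀ t, StronglyMeasurable[ℋ (t + 1)] (z t)) : StronglyAdapted ℋ (expAvg η z) := by
  intro t
  induction t with
  | zero => exact stronglyMeasurable_const
  | succ t ih =>
    exact ((ih.mono (ℋ.mono t.le_succ)).const_smul _).add ((hz t).const_smul _)

theorem memLp_expAvg {p : ENNReal} {η : ℝ} {z : ℕ → Ω → E} (hz : ∀ t, MemLp (z t) p μ) (t : ℕ) :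
    MemLp (expAvg η z t) p μ := by
  induction t with
  | zero => exact MemLp.zero
  | succ t ih => exact (ih.const_smul _).add ((hz t).const_smul _)

end NormedSpace

variable [InnerProductSpace ℝ E]

theorem MemLp.integrable_inner {f g : Ω → E} (hf : MemLp f 2 μ) (hg : MemLp g 2 μ) :
    Integrable (fun ω => ⟪f ω, g ω⟫) μ :=
  (L2.integrable_inner (hf.toLp f) (hg.toLp g)).congr <| by
    filter_upwards [hf.coeFn_toLp, hg.coeFn_toLp] with ω hfω hgω
    rw [hfω, hgω]

theorem integral_norm_add_sq_of_integral_inner_eq_zero {f g : Ω → E} (hf : MemLp f 2 μ)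
    (hg : MemLp g 2 μ) (h : ∫ ω, ⟪f ω, g ω⟫ ∂μ = 0) :
    ∫ ω, ‖f ω + g ω‖ ^ 2 ∂μ = ∫ ω, ‖f ω‖ ^ 2 ∂μ + ∫ ω, ‖g ω‖ ^ 2 ∂μ := by
  have hinner := (hf.integrable_inner hg).const_mul 2
  simp_rw [norm_add_sq_real]
  rw [integral_add (by exact hf.integrable_norm_sq.add hinner) hg.integrable_norm_sq,
    integral_add hf.integrable_norm_sq hinner, integral_const_mul, h, mul_zero, add_zero]

theorem integral_norm_expAvg_sq_le (ℋ : Filtration ℕ m0) {u : ℕ → Ω → E}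
    (hu : ∀ t, StronglyMeasurable[ℋ (t + 1)] (u t)) (hu2 : ∀ t, MemLp (u t) 2 μ)
    (horth : ∀ t f, StronglyMeasurable[ℋ t] f → MemLp f 2 μ → ∫ ω, ⟪f ω, u t ω⟫ ∂μ = 0)
    {V : ℝ} (hV : ∀ t, ∫ ω, ‖u t ω‖ ^ 2 ∂μ ≤ V) {η : ℝ} (hη0 : 0 ≤ η) (hη1 : η ≤ 1) (t : ℕ) :
    ∫ ω, ‖expAvg η u t ω‖ ^ 2 ∂μ ≤ η * V := by
  have hV0 : 0 ≤ V := (integral_nonneg fun _ => sq_nonneg _).trans (hV 0)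
  induction t with
  | zero => simpa using mul_nonneg hη0 hV0
  | succ t ih =>
    have horth' : ∫ ω, ⟪(1 - η) • expAvg η u t ω, η • u t ω⟫ ∂μ = 0 := by
      simp_rw [real_inner_smul_left, real_inner_smul_right]
      rw [integral_const_mul, integral_const_mul,
        horth t _ (stronglyAdapted_expAvg ℋ hu t) (memLp_expAvg hu2 t), mul_zero, mul_zero]
    have hstep : ∫ ω, ‖expAvg η u (t + 1) ω‖ ^ 2 ∂μ
        = (1 - η) ^ 2 * ∫ ω, ‖expAvg η u t ω‖ ^ 2 ∂μ + η ^ 2 * ∫ ω, ‖u t ω‖ ^ 2 ∂μ := by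
      simp only [expAvg_succ, Pi.add_apply, Pi.smul_apply]
      rw [integral_norm_add_sq_of_integral_inner_eq_zero (f := fun ω => (1 - η) • expAvg η u t ω)
        (g := fun ω => η • u t ω) ((memLp_expAvg hu2 t).const_smul _) ((hu2 t).const_smul η)
        horth']
      simp_rw [norm_smul, mul_pow, Real.norm_eq_abs, sq_abs]
      rw [integral_const_mul, integral_const_mul]
    calc ∫ ω, ‖expAvg η u (t + 1) ω‖ ^ 2 ∂μ
        ≤ (1 - η) ^ 2 * (η * V) + η ^ 2 * V := by rw [hstep]; gcongr; exact hV t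
      _ ≤ η * V := by nlinarith [mul_nonneg (mul_nonneg hη0 (sub_nonneg.2 hη1)) hV0]

variable [CompleteSpace E] [IsFiniteMeasure μ]

theorem integral_inner_condExp (hm : m ≤ m0) {f g : Ω → E}
    (hf : AEStronglyMeasurable[m] f μ) (hf2 : MemLp f 2 μ) (hg : MemLp g 2 μ) :
    ∫ ω, ⟪f ω, (μ[g|m]) ω⟫ ∂μ = ∫ ω, ⟪f ω, g ω⟫ ∂μ := by
  rw [← integral_condExp hm (f := fun ω => ⟪f ω, g ω⟫)]
  exact integral_congr_ae (condExp_bilin_of_aestronglyMeasurable_left (innerSL ℝ) hf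
    (hf2.integrable_inner hg) (hg.integrable one_le_two)).symm

theorem integral_inner_sub_condExp_eq_zero (hm : m ≤ m0) {f g : Ω → E}
    (hf : AEStronglyMeasurable[m] f μ) (hf2 : MemLp f 2 μ) (hg : MemLp g 2 μ) :
    ∫ ω, ⟪f ω, g ω - (μ[g|m]) ω⟫ ∂μ = 0 := by
  simp_rw [inner_sub_right]
  rw [integral_sub (hf2.integrable_inner hg) (hf2.integrable_inner (hg.condExp one_le_two)),
    integral_inner_condExp hm hf hf2 hg, sub_self]

theorem integral_norm_sub_condExp_sq_le (hm : m ≤ m0) {g : Ω → E} (hg : MemLp g 2 μ) :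
    ∫ ω, ‖g ω - (μ[g|m]) ω‖ ^ 2 ∂μ ≤ ∫ ω, ‖g ω‖ ^ 2 ∂μ := by
  have hc : MemLp (μ[g|m]) 2 μ := hg.condExp one_le_two
  have horth : ∫ ω, ⟪g ω - (μ[g|m]) ω, (μ[g|m]) ω⟫ ∂μ = 0 :=
    (integral_congr_ae (ae_of_all _ fun ω => real_inner_comm _ _)).trans
      (integral_inner_sub_condExp_eq_zero hm
        stronglyMeasurable_condExp.aestronglyMeasurable hc hg)
  have hpyth := integral_norm_add_sq_of_integral_inner_eq_zero (hg.sub hc) hc horth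
  simp only [Pi.sub_apply, sub_add_cancel] at hpyth
  rw [hpyth]
  exact le_add_of_nonneg_right (integral_nonneg fun _ => sq_nonneg _)

end MeasureTheory

theorem stmt9_general
    {d : ℕ}
    {Ω : Type*} {m0 : MeasurableSpace Ω} (μ : Measure Ω) [IsProbabilityMeasure μ]
    (ℋ : Filtration ℕ m0)
    (Bset : Set (EuclideanSpace ℝ (Fin d))) (D : ℝ)
    (hB0 : (0 : EuclideanSpace ℝ (Fin d)) ∈ Bset)
    (hBD : ∀ z ∈ Bset, ∀ w ∈ Bset, ‖z - w‖ ≤ D)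
    (x : ℕ → Ω → EuclideanSpace ℝ (Fin d))
    (hxB : ∀ t ω, x t ω ∈ Bset)
    (hxmeas : ∀ t, Measurable[ℋ (t + 1)] (x t))
    (η : ℝ) (hη0 : 0 < η) (hη1 : η < 1)
    (γ : ℕ → Ω → EuclideanSpace ℝ (Fin d))
    (hγ0 : ∀ ω, γ 0 ω = 0)
    (hγrec : ∀ t ω, γ (t + 1) ω = (1 - η) • γ t ω + η • x t ω)
    (γt : ℕ → Ω → EuclideanSpace ℝ (Fin d))
    (hγt0 : ∀ ω, γt 0 ω = 0)
    (hγtrec : ∀ t ω, γt (t + 1) ω = (1 - η) • γt t ω + η • (μ[x t | ℋ t]) ω) :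
    ∀ t : ℕ, (∫ ω, ‖γ (t + 1) ω - γt (t + 1) ω‖ ^ 2 ∂μ) ≤ η * D ^ 2 := by
  have hxD (t : ℕ) (ω : Ω) : ‖x t ω‖ ≤ D := by simpa using hBD _ (hxB t ω) 0 hB0
  have hx2 (t : ℕ) : MemLp (x t) 2 μ :=
    .of_bound ((hxmeas t).mono (ℋ.le _) le_rfl).aestronglyMeasurable D (ae_of_all _ (hxD t))
  have hγ : γ = expAvg η x := eq_expAvg (funext hγ0) fun t => funext (hγrec t)
  have hγt : γt = expAvg η fun t => μ[x t | ℋ t] :=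
    eq_expAvg (funext hγt0) fun t => funext (hγtrec t)
  intro t
  have hδ (ω : Ω) : γ (t + 1) ω - γt (t + 1) ω
      = expAvg η (x - fun s => μ[x s | ℋ s]) (t + 1) ω := by
    rw [expAvg_sub, hγ, hγt, Pi.sub_apply]
  simp_rw [hδ]
  refine integral_norm_expAvg_sq_le ℋ (fun s => ?_) (fun s => ?_) (fun s f hf hf2 => ?_)
    (fun s => ?_) hη0.le hη1.le (t + 1)
  · exact (hxmeas s).stronglyMeasurable.sub (stronglyMeasurable_condExp.mono (ℋ.mono s.le_succ))
  · exact (hx2 s).sub ((hx2 s).condExp one_le_two)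
  · exact integral_inner_sub_condExp_eq_zero (ℋ.le s) hf.aestronglyMeasurable hf2 (hx2 s)
  · refine (integral_norm_sub_condExp_sq_le (ℋ.le s) (hx2 s)).trans ?_
    calc ∫ ω, ‖x s ω‖ ^ 2 ∂μ ≤ ∫ _, D ^ 2 ∂μ := by
          refine integral_mono (hx2 s).integrable_norm_sq (integrable_const _) fun ω => ?_
          gcongr; exact hxD s ω
      _ = D ^ 2 := by simp

theorem stmt9
    {d : ℕ}
    {Ω : Type*} {m0 : MeasurableSpace Ω} (μ : Measure Ω) [IsProbabilityMeasure μ]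
    (ℋ : Filtration ℕ m0)
    (Bset : Set (EuclideanSpace ℝ (Fin d))) (D : ℝ)
    (hBconv : Convex ℝ Bset) (hBcpt : IsCompact Bset)
    (hB0 : (0 : EuclideanSpace ℝ (Fin d)) ∈ Bset)
    (hBD : ∀ z ∈ Bset, ∀ w ∈ Bset, ‖z - w‖ ≤ D)
    (x : ℕ → Ω → EuclideanSpace ℝ (Fin d))
    (hxB : ∀ t ω, x t ω ∈ Bset)
    (hxmeas : ∀ t, Measurable[ℋ (t + 1)] (x t))
    (η : ℝ) (hη0 : 0 < η) (hη1 : η < 1)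
    (γ : ℕ → Ω → EuclideanSpace ℝ (Fin d))
    (hγ0 : ∀ ω, γ 0 ω = 0)
    (hγrec : ∀ t ω, γ (t + 1) ω = (1 - η) • γ t ω + η • x t ω)
    (γt : ℕ → Ω → EuclideanSpace ℝ (Fin d))
    (hγt0 : ∀ ω, γt 0 ω = 0)
    (hγtrec : ∀ t ω, γt (t + 1) ω = (1 - η) • γt t ω + η • (μ[x t | ℋ t]) ω) :
    ∀ t : ℕ, (∫ ω, ‖γ (t + 1) ω - γt (t + 1) ω‖ ^ 2 ∂μ) ≤ η * D ^ 2 :=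
  stmt9_general μ ℋ Bset D hB0 hBD x hxB hxmeas η hη0 hη1 γ hγ0 hγrec γt hγt0 hγtrec
end

section
/- (Lipschitz continuity of the Frank–Wolfe gap.) For all γ, γ̃ ∈ 𝓑, | 𝒢(γ) − 𝒢(γ̃) | ≤ (2DL + M) ‖γ − γ̃‖. -/
/-! Splitting `⟪∇f γ, γ - v⟫ = ⟪∇f γ̃, γ̃ - v⟫ + ⟪∇f γ - ∇f γ̃, γ - v⟫ + ⟪∇f γ̃, γ - γ̃⟫` and
bounding the last two terms by Cauchy–Schwarz shows that every term of the supremum `𝒢 γ`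
exceeds `𝒢 γ̃` by at most `(D L + M) ‖γ - γ̃‖`. -/

open scoped RealInnerProductSpace

section FrankWolfeGap

variable {E : Type*} [NormedAddCommGroup E] [InnerProductSpace ℝ E]

/-- The paper's `𝒢 γ` is `frankWolfeGap C (∇f γ) γ`. -/
noncomputable def frankWolfeGap (C : Set E) (g x : E) : ℝ :=
  sSup ((fun v => ⟪g, x - v⟫) '' C)

theorem bddAbove_inner_sub_image {C : Set E} {D : ℝ} {g x : E} (hxC : ∀ v ∈ C, ‖x - v‖ ≤ D) :
    BddAbove ((fun v => ⟪g, x - v⟫) '' C) := by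
  refine ⟨‖g‖ * D, ?_⟩
  rintro _ ⟨v, hv, rfl⟩
  exact (real_inner_le_norm _ _).trans (mul_le_mul_of_nonneg_left (hxC v hv) (norm_nonneg _))

theorem frankWolfeGap_sub_le {C : Set E} {D : ℝ} {g h x y : E} (hC : C.Nonempty)
    (hxC : ∀ v ∈ C, ‖x - v‖ ≤ D) (hyC : ∀ v ∈ C, ‖y - v‖ ≤ D) :
    frankWolfeGap C g x - frankWolfeGap C h y ≤ D * ‖g - h‖ + ‖h‖ * ‖x - y‖ := by
  rw [sub_le_iff_le_add]
  refine csSup_le (hC.image _) ?_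
  rintro _ ⟨v, hv, rfl⟩
  have hsup : ⟪h, y - v⟫ ≤ frankWolfeGap C h y :=
    le_csSup (bddAbove_inner_sub_image hyC) ⟨v, hv, rfl⟩
  have hsplit : ⟪g, x - v⟫ = ⟪h, y - v⟫ + ⟪g - h, x - v⟫ + ⟪h, x - y⟫ := by
    simp only [inner_sub_left, inner_sub_right]
    ring
  have hdiff : ⟪g - h, x - v⟫ ≤ ‖g - h‖ * D :=
    (real_inner_le_norm _ _).trans (mul_le_mul_of_nonneg_left (hxC v hv) (norm_nonneg _))
  have hpoint : ⟪h, x - y⟫ ≤ ‖h‖ * ‖x - y‖ := real_inner_le_norm _ _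
  linarith

theorem frankWolfeGap_sub_le_of_lipschitz {K C : Set E} {D L M : ℝ} {F : E → E}
    (hCK : C ⊆ K) (hC : C.Nonempty) (hKD : ∀ z ∈ K, ∀ w ∈ K, ‖z - w‖ ≤ D)
    (hLip : ∀ z ∈ K, ∀ w ∈ K, ‖F z - F w‖ ≤ L * ‖z - w‖) (hM : ∀ z ∈ K, ‖F z‖ ≤ M)
    {p q : E} (hp : p ∈ K) (hq : q ∈ K) :
    frankWolfeGap C (F p) p - frankWolfeGap C (F q) q ≤ (D * L + M) * ‖p - q‖ := by
  have hD : 0 ≤ D := (norm_nonneg _).trans (hKD p hp p hp)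
  calc frankWolfeGap C (F p) p - frankWolfeGap C (F q) q
      ≤ D * ‖F p - F q‖ + ‖F q‖ * ‖p - q‖ :=
        frankWolfeGap_sub_le hC (fun v hv => hKD p hp v (hCK hv)) (fun v hv => hKD q hq v (hCK hv))
    _ ≤ D * (L * ‖p - q‖) + M * ‖p - q‖ := by
        gcongr
        exacts [hLip p hp q hq, hM q hq]
    _ = (D * L + M) * ‖p - q‖ := by ring

end FrankWolfeGap

theorem stmt17_general
    {d N : ℕ}
    (Bset : Set (EuclideanSpace ℝ (Fin d))) (D : ℝ)
    (hBD : ∀ z ∈ Bset, ∀ w ∈ Bset, ‖z - w‖ ≤ D)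
    (f' : EuclideanSpace ℝ (Fin d) → EuclideanSpace ℝ (Fin d)) (L M : ℝ)
    (hLip : ∀ z ∈ Bset, ∀ w ∈ Bset, ‖f' z - f' w‖ ≤ L * ‖z - w‖)
    (hM : ∀ z ∈ Bset, ‖f' z‖ ≤ M)
    (a : Fin N → EuclideanSpace ℝ (Fin d)) (b : Fin N → ℝ)
    (G : Set (EuclideanSpace ℝ (Fin d))) (hGsub : G ⊆ Bset)
    (C : Set (EuclideanSpace ℝ (Fin d))) (hC : C = {v | v ∈ G ∧ ∀ i, (inner ℝ (a i) v : ℝ) ≤ b i})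
    (hCne : C.Nonempty) :
    ∀ z ∈ Bset, ∀ w ∈ Bset,
      |sSup ((fun v => (inner ℝ (f' (z)) ((z) - v) : ℝ)) '' C) - sSup ((fun v => (inner ℝ (f' (w)) ((w) - v) : ℝ)) '' C)|
        ≤ (2 * D * L + M) * ‖z - w‖ := by
  intro z hz w hw
  show |frankWolfeGap C (f' z) z - frankWolfeGap C (f' w) w| ≤ _
  have hCB : C ⊆ Bset := hC ▸ fun v hv => hGsub hv.1
  have hgap {p q} (hp : p ∈ Bset) (hq : q ∈ Bset) :=
    frankWolfeGap_sub_le_of_lipschitz hCB hCne hBD hLip hM hp hq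
  have hconst : (D * L + M) * ‖z - w‖ ≤ (2 * D * L + M) * ‖z - w‖ := by
    nlinarith [mul_nonneg ((norm_nonneg _).trans (hBD z hz z hz))
      ((norm_nonneg _).trans (hLip z hz w hw))]
  refine abs_sub_le_iff.2 ⟨(hgap hz hw).trans hconst, ?_⟩
  exact (norm_sub_rev z w ▸ hgap hw hz).trans hconst

theorem stmt17
    {d N : ℕ}
    (Bset : Set (EuclideanSpace ℝ (Fin d))) (D : ℝ)
    (hBconv : Convex ℝ Bset) (hBcpt : IsCompact Bset)
    (hB0 : (0 : EuclideanSpace ℝ (Fin d)) ∈ Bset)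
    (hBD : ∀ z ∈ Bset, ∀ w ∈ Bset, ‖z - w‖ ≤ D)
    (f : EuclideanSpace ℝ (Fin d) → ℝ) (f' : EuclideanSpace ℝ (Fin d) → EuclideanSpace ℝ (Fin d)) (L M : ℝ)
    (hgrad : ∀ z, HasGradientAt f (f' z) z)
    (hLip : ∀ z ∈ Bset, ∀ w ∈ Bset, ‖f' z - f' w‖ ≤ L * ‖z - w‖)
    (hM : ∀ z ∈ Bset, ‖f' z‖ ≤ M)
    (a : Fin N → EuclideanSpace ℝ (Fin d)) (b : Fin N → ℝ)
    (G : Set (EuclideanSpace ℝ (Fin d))) (hGsub : G ⊆ Bset) (hGclosed : IsClosed G)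
    (hGconv : Convex ℝ G) (hG0 : (0 : EuclideanSpace ℝ (Fin d)) ∈ G)
    (C : Set (EuclideanSpace ℝ (Fin d))) (hC : C = {v | v ∈ G ∧ ∀ i, (inner ℝ (a i) v : ℝ) ≤ b i})
    (hCne : C.Nonempty) :
    ∀ z ∈ Bset, ∀ w ∈ Bset,
      |sSup ((fun v => (inner ℝ (f' (z)) ((z) - v) : ℝ)) '' C) - sSup ((fun v => (inner ℝ (f' (w)) ((w) - v) : ℝ)) '' C)|
        ≤ (2 * D * L + M) * ‖z - w‖ :=
  stmt17_general Bset D hBD f' L M hLip hM a b G hGsub C hC hCne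
end
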